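/- arXiv:2507.03338 — 7 statements merged into one kernel-verified Lean document; each statement's English description precedes it below -/
import Mathlib

section
/- Let X be a compact metrizable space, m ∈ M(M(X)), and let μ ∈ M(X) be the barycenter of m. Then for every Borel subset D of X, the function ν ↦ ν(D) on M(X) is Borel measurable, and μ(D) = ∫_{M(X)} ν(D) dm(ν). -/
/-!
For a closed set `F`, `ν ↦ ν F` is the pointwise limit of the weakly continuous maps
`ν ↦ ∫⁻ fₙ dν`, where `fₙ` are bounded continuous functions decreasing to the indicator of `F`.
Since closed sets form a generating π-system, the inclusion `M(X) → Measure X` is measurable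
for the Borel σ-algebra of the weak topology. Hence the mixture `m.bind toMeasure`, which gives
`D` the mass `∫ ν(D) dm(ν)`, is a well-defined probability measure; it integrates every bounded
continuous function as `μ` does, so it is `μ`.
-/

open MeasureTheory BoundedContinuousFunction
open scoped NNReal ENNReal

namespace MeasureTheory.ProbabilityMeasure

variable {X : Type*} [TopologicalSpace X] [MeasurableSpace X] [HasOuterApproxClosed X]
  [MeasurableSpace (ProbabilityMeasure X)]

theorem measurable_measure_apply_of_isClosed [OpensMeasurableSpace X]
    [OpensMeasurableSpace (ProbabilityMeasure X)] {F : Set X} (hF : IsClosed F) :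
    Measurable fun ν : ProbabilityMeasure X ↦ (ν : Measure X) F :=
  measurable_of_tendsto_metrizable
    (fun n ↦ (continuous_lintegral_boundedContinuousFunction (hF.apprSeq n)).measurable)
    (tendsto_pi_nhds.2 fun ν ↦ HasOuterApproxClosed.tendsto_lintegral_apprSeq hF ν)

variable [BorelSpace X] [OpensMeasurableSpace (ProbabilityMeasure X)]

theorem measurable_toMeasure : Measurable (toMeasure : ProbabilityMeasure X → Measure X) :=
  .measure_of_isPiSystem_of_isProbabilityMeasure
    (by rw [BorelSpace.measurable_eq (α := X), borel_eq_generateFrom_isClosed])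
    isPiSystem_isClosed fun _ ↦ measurable_measure_apply_of_isClosed

instance isProbabilityMeasure_bind_toMeasure (m : Measure (ProbabilityMeasure X))
    [IsProbabilityMeasure m] : IsProbabilityMeasure (m.bind toMeasure) :=
  isProbabilityMeasure_bind measurable_toMeasure.aemeasurable (.of_forall fun _ ↦ inferInstance)

theorem eq_bind_toMeasure_of_integral_eq (m : Measure (ProbabilityMeasure X))
    [IsProbabilityMeasure m] (μ : Measure X) [IsFiniteMeasure μ]
    (h : ∀ f : X →ᵇ ℝ, ∫ x, f x ∂μ = ∫ ν, ∫ x, f x ∂(ν : Measure X) ∂m) :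
    μ = m.bind toMeasure := by
  refine ext_of_forall_lintegral_eq_of_IsFiniteMeasure fun f ↦ ?_
  rw [← ENNReal.toReal_eq_toReal_iff' (lintegral_lt_top_of_nnreal μ f).ne
      (lintegral_lt_top_of_nnreal _ f).ne, toReal_lintegral_coe_eq_integral,
    Measure.lintegral_bind measurable_toMeasure.aemeasurable (by fun_prop),
    ← integral_toReal (continuous_lintegral_boundedContinuousFunction f).aemeasurable
      (.of_forall fun _ ↦ lintegral_lt_top_of_nnreal _ f)]
  simp_rw [toReal_lintegral_coe_eq_integral]
  exact h ⟨⟨fun x ↦ (f x : ℝ), by fun_prop⟩, f.map_bounded'⟩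

end MeasureTheory.ProbabilityMeasure

theorem barycenter_eval_borel_set_general {X : Type*} [TopologicalSpace X]
    [TopologicalSpace.MetrizableSpace X] [MeasurableSpace X] [BorelSpace X]
    [MeasurableSpace (ProbabilityMeasure X)] [BorelSpace (ProbabilityMeasure X)]
    (m : ProbabilityMeasure (ProbabilityMeasure X)) (μ : ProbabilityMeasure X)
    (hbary : ∀ f : C(X, ℝ), ∫ x, f x ∂(μ : Measure X) =
      ∫ ν, (∫ x, f x ∂((ν : Measure X))) ∂(m : Measure (ProbabilityMeasure X))) :
    ∀ D : Set X, MeasurableSet D →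
      Measurable (fun ν : ProbabilityMeasure X => (ν : Measure X) D) ∧
      (μ : Measure X) D =
        ∫⁻ ν, (ν : Measure X) D ∂(m : Measure (ProbabilityMeasure X)) := by
  intro D hD
  have hμ : (μ : Measure X) =
      (m : Measure (ProbabilityMeasure X)).bind ProbabilityMeasure.toMeasure :=
    ProbabilityMeasure.eq_bind_toMeasure_of_integral_eq _ _ fun f ↦ hbary f.toContinuousMap
  refine ⟨(Measure.measurable_coe hD).comp ProbabilityMeasure.measurable_toMeasure, ?_⟩
  rw [hμ, Measure.bind_apply hD ProbabilityMeasure.measurable_toMeasure.aemeasurable]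

theorem barycenter_eval_borel_set {X : Type*} [TopologicalSpace X] [CompactSpace X]
    [TopologicalSpace.MetrizableSpace X] [MeasurableSpace X] [BorelSpace X]
    [MeasurableSpace (ProbabilityMeasure X)] [BorelSpace (ProbabilityMeasure X)]
    (m : ProbabilityMeasure (ProbabilityMeasure X)) (μ : ProbabilityMeasure X)
    (hbary : ∀ f : C(X, ℝ), ∫ x, f x ∂(μ : Measure X) =
      ∫ ν, (∫ x, f x ∂((ν : Measure X))) ∂(m : Measure (ProbabilityMeasure X))) :
    ∀ D : Set X, MeasurableSet D →
      Measurable (fun ν : ProbabilityMeasure X => (ν : Measure X) D) ∧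
      (μ : Measure X) D =
        ∫⁻ ν, (ν : Measure X) D ∂(m : Measure (ProbabilityMeasure X)) :=
  barycenter_eval_borel_set_general m μ hbary
end

section
/- Let X be a compact metrizable space, μ₁, μ₂ Borel probability measures on X and f₁, f₂ ∈ C(X) with μ₁(f₁) + μ₂(f₂) > 0. Then there exist open sets U₁, U₂ ⊆ X such that min_{x ∈ cl(U₁)} f₁(x) + min_{x ∈ cl(U₂)} f₂(x) > 0 and μ₁(U₁) + μ₂(U₂) > 1. -/
/-! By the layer-cake formula, for functions with values in `[0, c]`, `∫ g₁ dμ₁ + ∫ g₂ dμ₂`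
is the integral over `t ∈ (0, c]` of `μ₁{t ≤ g₁} + μ₂{c - t ≤ g₂}` (reflecting `t ↦ c - t` in
the second term). If the left side exceeds `c`, the mean of this integrand exceeds `1`, hence
so does the integrand at some `t`. After shifting `f₁, f₂` into such a range this gives superlevel sets `{s ≤ f₁}`,
`{δ - s ≤ f₂}` with `δ > 0` whose measures add up to more than `1`; lowering both thresholds
by `δ / 4` makes them open while keeping the sum of the thresholds positive. -/

open MeasureTheory Set

section

variable {α : Type*} [MeasurableSpace α] {μ₁ μ₂ : Measure α}
  [IsProbabilityMeasure μ₁] [IsProbabilityMeasure μ₂]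

theorem exists_one_lt_measureReal_le_add_of_lt_integral_add {g₁ g₂ : α → ℝ} {c : ℝ}
    (hg₁ : Integrable g₁ μ₁) (hg₂ : Integrable g₂ μ₂)
    (hg₁_nonneg : 0 ≤ᵐ[μ₁] g₁) (hg₂_nonneg : 0 ≤ᵐ[μ₂] g₂)
    (hg₁_le : g₁ ≤ᵐ[μ₁] fun _ ↦ c) (hg₂_le : g₂ ≤ᵐ[μ₂] fun _ ↦ c)
    (h : c < ∫ x, g₁ x ∂μ₁ + ∫ x, g₂ x ∂μ₂) :
    ∃ t, 1 < μ₁.real {x | t ≤ g₁ x} + μ₂.real {x | c - t ≤ g₂ x} := by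
  have hc : 0 < c := by
    have h₁ : ∫ x, g₁ x ∂μ₁ ≤ c := by
      simpa using integral_mono_ae hg₁ (integrable_const c) hg₁_le
    have h₂ : ∫ x, g₂ x ∂μ₂ ≤ c := by
      simpa using integral_mono_ae hg₂ (integrable_const c) hg₂_le
    linarith
  set φ₁ : ℝ → ℝ := fun t ↦ μ₁.real {x | t ≤ g₁ x}
  set φ₂ : ℝ → ℝ := fun t ↦ μ₂.real {x | c - t ≤ g₂ x}
  have hφ₁ : IntegrableOn φ₁ (Ioc 0 c) :=
    (intervalIntegrable_iff_integrableOn_Ioc_of_le hc.le).1 <| Antitone.intervalIntegrable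
      fun s t hst ↦ measureReal_mono fun x hx ↦ hst.trans hx
  have hφ₂ : IntegrableOn φ₂ (Ioc 0 c) :=
    (intervalIntegrable_iff_integrableOn_Ioc_of_le hc.le).1 <| Monotone.intervalIntegrable
      fun s t hst ↦ measureReal_mono fun x hx ↦ (sub_le_sub_left hst c).trans hx
  have hlayer₁ : ∫ x, g₁ x ∂μ₁ = ∫ t in Ioc 0 c, φ₁ t :=
    hg₁.integral_eq_integral_Ioc_meas_le hg₁_nonneg hg₁_le
  have hlayer₂ : ∫ x, g₂ x ∂μ₂ = ∫ t in Ioc 0 c, φ₂ t := by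
    rw [hg₂.integral_eq_integral_Ioc_meas_le hg₂_nonneg hg₂_le,
      ← intervalIntegral.integral_of_le hc.le, ← intervalIntegral.integral_of_le hc.le,
      intervalIntegral.integral_comp_sub_left (fun t ↦ μ₂.real {x | t ≤ g₂ x}), sub_self,
      sub_zero]
  obtain ⟨t, -, ht⟩ := exists_setAverage_le (by simp [hc]) measure_Ioc_lt_top.ne (hφ₁.add hφ₂)
  refine ⟨t, lt_of_lt_of_le ?_ ht⟩
  rw [setAverage_eq, Pi.add_def, integral_add hφ₁ hφ₂, ← hlayer₁, ← hlayer₂,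
    Real.volume_real_Ioc_of_le hc.le, sub_zero, smul_eq_mul, lt_inv_mul_iff₀ hc, mul_one]
  exact h

theorem exists_one_lt_measureReal_le_add_of_abs_le {f₁ f₂ : α → ℝ} {M δ : ℝ}
    (hf₁ : AEStronglyMeasurable f₁ μ₁) (hf₂ : AEStronglyMeasurable f₂ μ₂)
    (hf₁_le : ∀ᵐ x ∂μ₁, |f₁ x| ≤ M) (hf₂_le : ∀ᵐ x ∂μ₂, |f₂ x| ≤ M) (hδ : 0 ≤ δ)
    (h : δ < ∫ x, f₁ x ∂μ₁ + ∫ x, f₂ x ∂μ₂) :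
    ∃ s, 1 < μ₁.real {x | s ≤ f₁ x} + μ₂.real {x | δ - s ≤ f₂ x} := by
  have hint₁ : Integrable f₁ μ₁ := .of_bound hf₁ M hf₁_le
  have hint₂ : Integrable f₂ μ₂ := .of_bound hf₂ M hf₂_le
  have hshift₁ : ∫ x, f₁ x + M ∂μ₁ = ∫ x, f₁ x ∂μ₁ + M := by
    simp [integral_add hint₁ (integrable_const M)]
  have hshift₂ : ∫ x, f₂ x + M ∂μ₂ = ∫ x, f₂ x ∂μ₂ + M := by
    simp [integral_add hint₂ (integrable_const M)]
  obtain ⟨t, ht⟩ := exists_one_lt_measureReal_le_add_of_lt_integral_add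
    (g₁ := fun x ↦ f₁ x + M) (g₂ := fun x ↦ f₂ x + M) (c := 2 * M + δ)
    (hint₁.add (integrable_const M)) (hint₂.add (integrable_const M))
    (hf₁_le.mono fun x hx ↦ show 0 ≤ f₁ x + M by linarith [neg_abs_le (f₁ x)])
    (hf₂_le.mono fun x hx ↦ show 0 ≤ f₂ x + M by linarith [neg_abs_le (f₂ x)])
    (hf₁_le.mono fun x hx ↦ by linarith [le_abs_self (f₁ x)])
    (hf₂_le.mono fun x hx ↦ by linarith [le_abs_self (f₂ x)])
    (by linarith)
  refine ⟨t - M, ht.trans_eq ?_⟩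
  congr 2 <;> ext x <;> simp only [mem_ofPred_eq] <;> constructor <;> intro hx <;> linarith

end

theorem open_sets_selection_general {X : Type*} [TopologicalSpace X] [CompactSpace X]
    [MeasurableSpace X] [BorelSpace X]
    (μ₁ μ₂ : ProbabilityMeasure X) (f₁ f₂ : C(X, ℝ))
    (h : 0 < ∫ x, f₁ x ∂(μ₁ : Measure X) + ∫ x, f₂ x ∂(μ₂ : Measure X)) :
    ∃ U₁ U₂ : Set X, IsOpen U₁ ∧ IsOpen U₂ ∧
      (∃ t₁ t₂ : ℝ, (∀ x ∈ closure U₁, t₁ ≤ f₁ x) ∧ (∀ x ∈ closure U₂, t₂ ≤ f₂ x) ∧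
        0 < t₁ + t₂) ∧
      1 < ((μ₁ : Measure X) U₁).toReal + ((μ₂ : Measure X) U₂).toReal := by
  obtain ⟨δ, hδ, hδ_lt⟩ := exists_between h
  obtain ⟨s, hs⟩ := exists_one_lt_measureReal_le_add_of_abs_le
    (μ₁ := (μ₁ : Measure X)) (μ₂ := μ₂) (δ := δ)
    f₁.continuous.aestronglyMeasurable f₂.continuous.aestronglyMeasurable
    (.of_forall fun x ↦ (f₁.norm_coe_le_norm x).trans (le_max_left _ ‖f₂‖))
    (.of_forall fun x ↦ (f₂.norm_coe_le_norm x).trans (le_max_right ‖f₁‖ _))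
    hδ.le hδ_lt
  refine ⟨{x | s - δ / 4 < f₁ x}, {x | 3 * δ / 4 - s < f₂ x},
    isOpen_lt continuous_const f₁.continuous, isOpen_lt continuous_const f₂.continuous,
    ⟨s - δ / 4, 3 * δ / 4 - s,
      fun x hx ↦ closure_lt_subset_le continuous_const f₁.continuous hx,
      fun x hx ↦ closure_lt_subset_le continuous_const f₂.continuous hx, by linarith⟩, ?_⟩
  refine hs.trans_le (add_le_add (measureReal_mono (ofPred_subset_ofPred.2 fun x hx ↦ ?_))
    (measureReal_mono (ofPred_subset_ofPred.2 fun x hx ↦ ?_))) <;> linarith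

theorem open_sets_selection {X : Type*} [TopologicalSpace X] [CompactSpace X]
    [TopologicalSpace.MetrizableSpace X] [MeasurableSpace X] [BorelSpace X]
    (μ₁ μ₂ : ProbabilityMeasure X) (f₁ f₂ : C(X, ℝ))
    (h : 0 < ∫ x, f₁ x ∂(μ₁ : Measure X) + ∫ x, f₂ x ∂(μ₂ : Measure X)) :
    ∃ U₁ U₂ : Set X, IsOpen U₁ ∧ IsOpen U₂ ∧
      (∃ t₁ t₂ : ℝ, (∀ x ∈ closure U₁, t₁ ≤ f₁ x) ∧ (∀ x ∈ closure U₂, t₂ ≤ f₂ x) ∧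
        0 < t₁ + t₂) ∧
      1 < ((μ₁ : Measure X) U₁).toReal + ((μ₂ : Measure X) U₂).toReal :=
  open_sets_selection_general μ₁ μ₂ f₁ f₂ h
end

section
/- Let k ∈ ℕ and let {(A_{n,1},...,A_{n,k})}_{n∈ℕ} be a sequence of k-tuples of subsets of a set Y. Then there is an infinite set F ⊆ ℕ such that either the family {(A_{n,1},...,A_{n,k}) : n ∈ F} is independent, or for every y ∈ Y there exists j ∈ {1,...,k} such that the set {n ∈ F : y ∈ A_{n,j}} is finite. -/
/-!
If no infinite `F` realizes the second alternative, then every infinite `G ⊆ ℕ` contains a point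
`y` *recurrent* in `G`: for every `j`, `y ∈ A n j` for infinitely many `n ∈ G`. Call `(s, G)`
recurrently independent if every pattern `σ` on the finite set `s` is realized by a point that is
recurrent in any prescribed infinite `H ⊆ G`; then `(∅, G)` is, and such a pair can always be
extended to `(s ∪ {n}, G')` with `n ∉ s` and `G'` infinite. Iterating, the union of the growing
sets `s` is an infinite independent family.

The extension step is a diagonal argument. If it failed, one could choose `n₀ < n₁ < ⋯` in `G` and
`H₀ ⊇ H₁ ⊇ ⋯` with `nₗ ∈ Hᵢ` for `i < l`, together with a pattern on `s ∪ {nᵢ}` none of whose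
realizers is recurrent in `Hᵢ`. These patterns take only finitely many values on `s` and at `nᵢ`,
so one choice `(τ, j)` occurs for infinitely many `i`. A realizer of `τ` recurrent in the set of
those `nᵢ` lies in some `A nᵢ j`, and it is recurrent in `Hᵢ`, which contains all but finitely
many of those `nₗ`: it realizes the `i`-th pattern, a contradiction.
-/

open Set

namespace Rosenthal

theorem exists_seq_of_forall_exists {α : Type*} {P : α → Prop} {r : α → α → Prop} {a : α}
    (ha : P a) (h : ∀ x, P x → ∃ y, P y ∧ r x y) :
    ∃ f : ℕ → α, (∀ n, P (f n)) ∧ ∀ n, r (f n) (f (n + 1)) := by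
  choose g hgP hgr using h
  let f : ℕ → {x // P x} := fun n => Nat.rec ⟨a, ha⟩ (fun _ x => ⟨g x.1 x.2, hgP x.1 x.2⟩) n
  exact ⟨fun n => (f n).1, fun n => (f n).2, fun n => hgr (f n).1 (f n).2⟩

theorem exists_seq_nested {L : Set ℕ} (hL : L.Infinite) (P : ℕ → Set ℕ → Prop)
    (h : ∀ n ∈ L, ∀ L' ⊆ L, L'.Infinite → ∃ H ⊆ L', H.Infinite ∧ P n H) :
    ∃ (N : ℕ → ℕ) (H : ℕ → Set ℕ), StrictMono N ∧ (∀ i, N i ∈ L) ∧ (∀ i, P (N i) (H i)) ∧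
      ∀ i l, i < l → N l ∈ H i := by
  have above (n : ℕ) (L' : Set ℕ) (hL' : L'.Infinite) : {m ∈ L' | n < m}.Infinite :=
    (hL'.sdiff (finite_Iic n)).mono fun m hm => ⟨hm.1, not_le.mp hm.2⟩
  let Good (x : ℕ × Set ℕ) : Prop :=
    x.1 ∈ L ∧ x.2 ⊆ L ∧ x.2.Infinite ∧ (∀ m ∈ x.2, x.1 < m) ∧ P x.1 x.2
  have next (n : ℕ) (hn : n ∈ L) (L' : Set ℕ) (hL'L : L' ⊆ L) (hL' : L'.Infinite) :
      ∃ H, Good (n, H) ∧ H ⊆ L' := by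
    obtain ⟨H, hHL', hH, hP⟩ := h n hn _ ((sep_subset _ _).trans hL'L) (above n L' hL')
    exact ⟨H, ⟨hn, hHL'.trans ((sep_subset _ _).trans hL'L), hH, fun m hm => (hHL' hm).2, hP⟩,
      hHL'.trans (sep_subset _ _)⟩
  obtain ⟨n₀, hn₀⟩ := hL.nonempty
  obtain ⟨H₀, hH₀, -⟩ := next n₀ hn₀ L subset_rfl hL
  obtain ⟨x, hx, hxx⟩ := exists_seq_of_forall_exists (r := fun x y => y.1 ∈ x.2 ∧ y.2 ⊆ x.2)
    hH₀ fun x ⟨_, hxL, hx, _⟩ => by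
      obtain ⟨n, hn⟩ := hx.nonempty
      obtain ⟨H, hH, hHx⟩ := next n (hxL hn) x.2 hxL hx
      exact ⟨(n, H), hH, hn, hHx⟩
  have hanti : Antitone fun i => (x i).2 := antitone_nat_of_succ_le fun i => (hxx i).2
  refine ⟨fun i => (x i).1, fun i => (x i).2,
    strictMono_nat_of_lt_succ fun i => (hx i).2.2.2.1 _ (hxx i).1, fun i => (hx i).1,
    fun i => (hx i).2.2.2.2, fun i l hil => ?_⟩
  obtain ⟨l, rfl⟩ := Nat.exists_eq_add_of_lt hil
  exact hanti (by omega : i ≤ i + l) (hxx (i + l)).1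

variable {Y : Type*} {k : ℕ} (A : ℕ → Fin k → Set Y)

def Recurrent (H : Set ℕ) (y : Y) : Prop :=
  ∀ j, {n ∈ H | y ∈ A n j}.Infinite

def RecurrentlyIndependent (s : Finset ℕ) (G : Set ℕ) : Prop :=
  ∀ σ : ℕ → Fin k, ∀ H ⊆ G, H.Infinite → ∃ y ∈ ⋂ m ∈ s, A m (σ m), Recurrent A H y

variable {A}

theorem Recurrent.of_finite_sdiff {H H' : Set ℕ} {y : Y} (hy : Recurrent A H y)
    (hHH' : (H \ H').Finite) : Recurrent A H' y := fun j =>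
  ((hy j).sdiff hHH').mono fun _ hn => ⟨of_not_not fun hnH' => hn.2 ⟨hn.1.1, hnH'⟩, hn.1.2⟩

theorem recurrentlyIndependent_empty (hrec : ∀ G : Set ℕ, G.Infinite → ∃ y, Recurrent A G y)
    (G : Set ℕ) : RecurrentlyIndependent A ∅ G := fun _ H _ hH => by
  obtain ⟨y, hy⟩ := hrec H hH
  exact ⟨y, by simp, hy⟩

namespace RecurrentlyIndependent

variable {s t : Finset ℕ} {G G' : Set ℕ}

theorem mono (h : RecurrentlyIndependent A s G) (hts : t ⊆ s) (hG'G : G' ⊆ G) :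
    RecurrentlyIndependent A t G' := fun σ H hHG' hH => by
  obtain ⟨y, hy, hrec⟩ := h σ H (hHG'.trans hG'G) hH
  exact ⟨y, biInter_subset_biInter_left (Finset.coe_subset.mpr hts) hy, hrec⟩

theorem nonempty_iInter (h : RecurrentlyIndependent A s G) (hG : G.Infinite) (σ : ℕ → Fin k) :
    (⋂ m ∈ s, A m (σ m)).Nonempty := by
  obtain ⟨y, hy, -⟩ := h σ G subset_rfl hG
  exact ⟨y, hy⟩

theorem exists_insert (h : RecurrentlyIndependent A s G) (hG : G.Infinite) :
    ∃ n ∈ G, ∃ G', G'.Infinite ∧ RecurrentlyIndependent A (insert n s) G' := by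
  by_contra! hbad
  obtain ⟨N, H, hN, hNG, hNH, hHN⟩ := exists_seq_nested hG
    (fun n H => ∃ σ : ℕ → Fin k, ¬∃ y ∈ ⋂ m ∈ insert n s, A m (σ m), Recurrent A H y)
    fun n hn L' _ hL' => by
      have hL'bad := hbad n hn L' hL'
      simp only [RecurrentlyIndependent, not_forall, exists_prop] at hL'bad
      obtain ⟨σ, H, hHL', hH, hσ⟩ := hL'bad
      exact ⟨H, hHL', hH, σ, hσ⟩
  choose σ hσ using hNH
  let pattern (i : ℕ) : (s → Fin k) × Fin k := (fun m => σ i m, σ i (N i))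
  obtain ⟨c, hc⟩ := Finite.exists_infinite_fiber pattern
  have hI : (pattern ⁻¹' {c}).Infinite := infinite_coe_iff.mp hc
  obtain ⟨i₀, hi₀⟩ := hI.nonempty
  obtain ⟨y, hy, hrec⟩ := h (σ i₀) (N '' (pattern ⁻¹' {c}))
    (image_subset_iff.mpr fun i _ => hNG i) (hI.image hN.injective.injOn)
  obtain ⟨_, ⟨⟨i, hi, rfl⟩, hyN⟩⟩ := (hrec (σ i₀ (N i₀))).nonempty
  have hpat : pattern i = pattern i₀ := hi.trans hi₀.symm
  have hσs (m : ℕ) (hm : m ∈ s) : σ i m = σ i₀ m := congrFun (congrArg Prod.fst hpat) ⟨m, hm⟩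
  have hσN : σ i (N i) = σ i₀ (N i₀) := congrArg Prod.snd hpat
  refine hσ i ⟨y, ?_, hrec.of_finite_sdiff (((finite_Iic i).image N).subset ?_)⟩
  · simp only [Finset.set_biInter_insert, mem_inter_iff, mem_iInter, hσN] at hy ⊢
    exact ⟨hyN, fun m hm => hσs m hm ▸ hy m hm⟩
  · rintro _ ⟨⟨l, -, rfl⟩, hl⟩
    exact ⟨l, not_lt.mp fun hil => hl (hHN i l hil), rfl⟩

theorem exists_ssubset (h : RecurrentlyIndependent A s G) (hG : G.Infinite) :
    ∃ t, s ⊂ t ∧ ∃ G', G'.Infinite ∧ RecurrentlyIndependent A t G' := by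
  obtain ⟨n, hn, G', hG', ht⟩ :=
    (h.mono subset_rfl sdiff_subset).exists_insert (hG.sdiff s.finite_toSet)
  exact ⟨insert n s, Finset.ssubset_insert hn.2, G', hG', ht⟩

end RecurrentlyIndependent

theorem exists_infinite_independent (hrec : ∀ G : Set ℕ, G.Infinite → ∃ y, Recurrent A G y) :
    ∃ F : Set ℕ, F.Infinite ∧
      ∀ J : Finset ℕ, ↑J ⊆ F → ∀ σ : ℕ → Fin k, (⋂ n ∈ J, A n (σ n)).Nonempty := by
  obtain ⟨p, hp, hlt⟩ := exists_seq_of_forall_exists (r := fun p q => p.1 ⊂ q.1)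
    (P := fun p : Finset ℕ × Set ℕ => p.2.Infinite ∧ RecurrentlyIndependent A p.1 p.2)
    (a := (∅, univ)) ⟨infinite_univ, recurrentlyIndependent_empty hrec univ⟩
    fun p hp => by
      obtain ⟨t, hst, G', hG', ht⟩ := hp.2.exists_ssubset hp.1
      exact ⟨(t, G'), ⟨hG', ht⟩, hst⟩
  have hmono : StrictMono fun i => (p i).1 := strictMono_nat_of_lt_succ hlt
  refine ⟨⋃ i, ((p i).1 : Set ℕ), infinite_iUnion (Finset.coe_injective.comp hmono.injective),
    fun J hJ σ => ?_⟩
  have hdir : Directed (· ⊆ ·) fun i => ((p i).1 : Set ℕ) :=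
    Monotone.directed_le fun _ _ hij => Finset.coe_subset.mpr (hmono.monotone hij)
  obtain ⟨i, hi⟩ := hdir.exists_mem_subset_of_finset_subset_biUnion hJ
  exact ((hp i).2.mono (Finset.coe_subset.mp hi) subset_rfl).nonempty_iInter (hp i).1 σ

end Rosenthal

theorem rosenthal_dichotomy {Y : Type*} (k : ℕ) (A : ℕ → Fin k → Set Y) :
    ∃ F : Set ℕ, F.Infinite ∧
      ((∀ J : Finset ℕ, J.Nonempty → ↑J ⊆ F → ∀ σ : ℕ → Fin k,
          (⋂ n ∈ J, A n (σ n)).Nonempty) ∨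
        (∀ y : Y, ∃ j : Fin k, {n ∈ F | y ∈ A n j}.Finite)) := by
  by_cases h : ∃ F : Set ℕ, F.Infinite ∧ ∀ y : Y, ∃ j : Fin k, {n ∈ F | y ∈ A n j}.Finite
  · obtain ⟨F, hF, hfin⟩ := h
    exact ⟨F, hF, Or.inr hfin⟩
  · push Not at h
    obtain ⟨F, hF, hind⟩ := Rosenthal.exists_infinite_independent h
    exact ⟨F, hF, Or.inl fun J _ => hind J⟩
end

section
/- Let C > 1 and 1 ≤ q < ∞. Then there is a constant c > 0 depending only on C and q such that if ℓ_q^n is C-isomorphic to a linear subspace of ℓ_∞^m for some m ≥ 2, then n ≤ c·log m. -/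
open scoped ENNReal

open Finset Real

/-!
Let `aᵢ` be the coordinate functionals `v ↦ (Φ v)ᵢ`. Every sign vector `ε ∈ {±1}ⁿ` has
`‖ε‖_q = n^{1/q}`, so the lower bound on `Φ` gives, for each `ε`, some `i` with
`|⟨ε, aᵢ⟩| ≥ n^{1/q}`. The upper bound says `∑_{j ∈ S} |aᵢⱼ| ≤ C |S|^{1/q}` for every set
`S` of coordinates. Splitting `aᵢ` at a suitable level `λ`, the large coordinates are so few
that they contribute at most `n^{1/q}/2` to any signed sum, while the small ones have squared
`ℓ₂`-norm at most `λ C n^{1/q}`; Hoeffding's inequality then shows that at most a fraction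
`2 exp(-n/K)`, `K = 8C(2C)^q`, of all sign vectors satisfy `|⟨ε, aᵢ⟩| ≥ n^{1/q}`.
A union bound over the `m` coordinates gives `1 ≤ 2m exp(-n/K)`, i.e. `n ≤ K log(2m)`.
-/

section Rademacher

variable {ι : Type*} [Fintype ι]

def boolSign (b : Bool) : ℝ := if b then 1 else -1

@[simp]
lemma abs_boolSign (b : Bool) : |boolSign b| = 1 := by
  cases b <;> simp [boolSign]

lemma boolSign_decide_nonneg_mul (x : ℝ) : boolSign (decide (0 ≤ x)) * x = |x| := by
  by_cases hx : 0 ≤ x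
  · simp [boolSign, hx, abs_of_nonneg hx]
  · simp [boolSign, hx, abs_of_neg (not_le.mp hx)]

def rademacherSum (a : ι → ℝ) (ε : ι → Bool) : ℝ := ∑ j, boolSign (ε j) * a j

lemma rademacherSum_neg (a : ι → ℝ) (ε : ι → Bool) :
    rademacherSum (-a) ε = -rademacherSum a ε := by
  simp [rademacherSum, sum_neg_distrib]

lemma rademacherSum_add (a b : ι → ℝ) (ε : ι → Bool) :
    rademacherSum (a + b) ε = rademacherSum a ε + rademacherSum b ε := by
  simp [rademacherSum, mul_add, sum_add_distrib]

lemma abs_rademacherSum_le (a : ι → ℝ) (ε : ι → Bool) :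
    |rademacherSum a ε| ≤ ∑ j, |a j| :=
  (abs_sum_le_sum_abs _ _).trans_eq (by simp [abs_mul])

lemma sum_exp_rademacherSum_le [DecidableEq ι] (a : ι → ℝ) (t : ℝ) :
    ∑ ε : ι → Bool, exp (t * rademacherSum a ε) ≤
      2 ^ Fintype.card ι * exp (t ^ 2 * (∑ j, a j ^ 2) / 2) :=
  calc ∑ ε : ι → Bool, exp (t * rademacherSum a ε)
      = ∏ j, ∑ b : Bool, exp (t * (boolSign b * a j)) := by
        rw [Fintype.prod_sum]
        simp only [rademacherSum, mul_sum, exp_sum]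
    _ = ∏ j, 2 * cosh (t * a j) := by
        refine prod_congr rfl fun j _ => ?_
        simp only [Fintype.sum_bool, boolSign, cosh_eq, if_true, Bool.false_eq_true, if_false]
        ring_nf
    _ ≤ ∏ j, 2 * exp ((t * a j) ^ 2 / 2) :=
        prod_le_prod (fun _ _ => by positivity) fun j _ => by gcongr; exact cosh_le_exp_half_sq _
    _ = 2 ^ Fintype.card ι * exp (t ^ 2 * (∑ j, a j ^ 2) / 2) := by
        rw [prod_mul_distrib, prod_const, ← exp_sum, card_univ, mul_sum, sum_div]
        simp only [mul_pow]

lemma card_rademacherSum_tail_le [DecidableEq ι] {a : ι → ℝ} {s V : ℝ} (hs : 0 < s)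
    (hV : 0 < V) (ha : ∑ j, a j ^ 2 ≤ V) :
    (#{ε | s ≤ rademacherSum a ε} : ℝ) ≤ 2 ^ Fintype.card ι * exp (-s ^ 2 / (2 * V)) := by
  set t := s / V
  have hmarkov : (#{ε | s ≤ rademacherSum a ε} : ℝ) * exp (t * s) ≤
      2 ^ Fintype.card ι * exp (t ^ 2 * V / 2) :=
    calc (#{ε | s ≤ rademacherSum a ε} : ℝ) * exp (t * s)
        = ∑ ε ∈ {ε | s ≤ rademacherSum a ε}, exp (t * s) := by simp
      _ ≤ ∑ ε ∈ {ε | s ≤ rademacherSum a ε}, exp (t * rademacherSum a ε) :=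
          sum_le_sum fun ε hε => by gcongr; exact (mem_filter.1 hε).2
      _ ≤ ∑ ε, exp (t * rademacherSum a ε) :=
          sum_le_univ_sum_of_nonneg fun _ => (exp_pos _).le
      _ ≤ 2 ^ Fintype.card ι * exp (t ^ 2 * (∑ j, a j ^ 2) / 2) := sum_exp_rademacherSum_le a t
      _ ≤ 2 ^ Fintype.card ι * exp (t ^ 2 * V / 2) := by gcongr
  rw [← le_div_iff₀ (exp_pos _), mul_div_assoc, ← exp_sub] at hmarkov
  refine hmarkov.trans_eq ?_
  rw [show t ^ 2 * V / 2 - t * s = -s ^ 2 / (2 * V) by simp only [t]; field_simp; ring]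

lemma card_abs_rademacherSum_tail_le [DecidableEq ι] {a : ι → ℝ} {s V : ℝ} (hs : 0 < s)
    (hV : 0 < V) (ha : ∑ j, a j ^ 2 ≤ V) :
    (#{ε | s ≤ |rademacherSum a ε|} : ℝ) ≤
      2 * 2 ^ Fintype.card ι * exp (-s ^ 2 / (2 * V)) := by
  have hcover : ({ε | s ≤ |rademacherSum a ε|} : Finset (ι → Bool)) ⊆
      ({ε | s ≤ rademacherSum a ε} : Finset _) ∪
        ({ε | s ≤ rademacherSum (-a) ε} : Finset _) := by
    intro ε
    simp [le_abs, rademacherSum_neg]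
  have hpos := card_rademacherSum_tail_le hs hV ha
  have hneg := card_rademacherSum_tail_le (a := -a) hs hV (by simpa using ha)
  calc (#{ε | s ≤ |rademacherSum a ε|} : ℝ)
      ≤ #{ε | s ≤ rademacherSum a ε} + #{ε | s ≤ rademacherSum (-a) ε} := by
        exact_mod_cast (card_le_card hcover).trans (card_union_le _ _)
    _ ≤ 2 * 2 ^ Fintype.card ι * exp (-s ^ 2 / (2 * V)) := by linarith

end Rademacher

section Truncation

variable {ι : Type*} [Fintype ι] {a : ι → ℝ} {C : ℝ}

lemma card_filter_le_abs_le {r N : ℝ} (hC : 0 < C) (hr : r ≤ 1) (hN : 0 < N)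
    (ha : ∀ S : Finset ι, ∑ j ∈ S, |a j| ≤ C * (#S : ℝ) ^ r) :
    (#{j | 2 * C * N ^ r / N ≤ |a j|} : ℝ) ≤ N := by
  set B : Finset ι := {j | 2 * C * N ^ r / N ≤ |a j|}
  by_contra! hNB
  have hB : 0 < (#B : ℝ) := hN.trans hNB
  have hpow : (#B : ℝ) ^ r / #B ≤ N ^ r / N := by
    rw [← rpow_sub_one hB.ne', ← rpow_sub_one hN.ne']
    exact rpow_le_rpow_of_nonpos hN hNB.le (by linarith)
  have hlarge : 2 * C * N ^ r / N * #B ≤ C * (N ^ r / N) * #B :=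
    calc 2 * C * N ^ r / N * #B
        ≤ ∑ j ∈ B, |a j| := by
          rw [mul_comm, ← nsmul_eq_mul]
          exact card_nsmul_le_sum B _ _ fun j hj => (mem_filter.1 hj).2
      _ ≤ C * #B ^ r := ha B
      _ = C * (#B ^ r / #B) * #B := by field_simp
      _ ≤ C * (N ^ r / N) * #B := by gcongr
  have hpos : 0 < C * (N ^ r / N) * #B := by positivity
  linarith [show 2 * C * N ^ r / N * #B = 2 * (C * (N ^ r / N) * #B) by ring]

lemma abs_rademacherSum_large_le {r N : ℝ} (hC : 0 < C) (hr₀ : 0 ≤ r) (hr : r ≤ 1)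
    (hN : 0 < N) (ha : ∀ S : Finset ι, ∑ j ∈ S, |a j| ≤ C * (#S : ℝ) ^ r)
    (ε : ι → Bool) :
    |rademacherSum (fun j => if 2 * C * N ^ r / N ≤ |a j| then a j else 0) ε| ≤ C * N ^ r :=
  calc _ ≤ ∑ j, |if 2 * C * N ^ r / N ≤ |a j| then a j else 0| := abs_rademacherSum_le _ ε
    _ = ∑ j with 2 * C * N ^ r / N ≤ |a j|, |a j| := by
        rw [sum_filter]; exact sum_congr rfl fun j _ => by split_ifs <;> simp
    _ ≤ C * (#{j | 2 * C * N ^ r / N ≤ |a j|} : ℝ) ^ r := ha _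
    _ ≤ C * N ^ r := by gcongr; exact card_filter_le_abs_le hC hr hN ha

lemma sum_sq_small_le {r lam : ℝ} (hC : 0 ≤ C) (hr₀ : 0 ≤ r) (hlam : 0 ≤ lam)
    (ha : ∀ S : Finset ι, ∑ j ∈ S, |a j| ≤ C * (#S : ℝ) ^ r) :
    ∑ j, (if lam ≤ |a j| then 0 else a j) ^ 2 ≤ lam * (C * (Fintype.card ι : ℝ) ^ r) :=
  calc ∑ j, (if lam ≤ |a j| then 0 else a j) ^ 2
      ≤ ∑ j, lam * |if lam ≤ |a j| then 0 else a j| := by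
        refine sum_le_sum fun j _ => ?_
        split_ifs with h
        · simp
        · rw [← sq_abs]; nlinarith [abs_nonneg (a j)]
    _ = lam * ∑ j with ¬ lam ≤ |a j|, |a j| := by
        rw [← mul_sum, sum_filter]
        exact congrArg _ (sum_congr rfl fun j _ => by split_ifs <;> simp)
    _ ≤ lam * (C * (Fintype.card ι : ℝ) ^ r) := by
        gcongr
        refine (ha _).trans ?_
        gcongr
        exact_mod_cast card_le_univ _

lemma card_abs_rademacherSum_tail_le_of_sum_abs_le [DecidableEq ι] [Nonempty ι] {p : ℝ}
    (hC : 0 < C) (hp : 1 ≤ p)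
    (ha : ∀ S : Finset ι, ∑ j ∈ S, |a j| ≤ C * (#S : ℝ) ^ (1 / p)) :
    (#{ε | (Fintype.card ι : ℝ) ^ (1 / p) ≤ |rademacherSum a ε|} : ℝ) ≤
      2 * 2 ^ Fintype.card ι * exp (-(Fintype.card ι : ℝ) / (8 * C * (2 * C) ^ p)) := by
  set n : ℝ := (Fintype.card ι : ℝ)
  have hn : 0 < n := by simp [n, Fintype.card_pos]
  have hr₀ : 0 ≤ 1 / p := by positivity
  have hr : 1 / p ≤ 1 := by rw [div_le_one (by linarith)]; exact hp
  set t := n ^ (1 / p)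
  have ht : 0 < t := by positivity
  set N := n / (2 * C) ^ p
  have hN : 0 < N := by positivity
  have hNt : 2 * C * N ^ (1 / p) = t := by
    rw [div_rpow hn.le (by positivity), one_div, rpow_rpow_inv (by positivity) (by linarith)]
    field_simp
    rfl
  -- At most `N` coordinates reach `lam` (`card_filter_le_abs_le`), so they contribute at most
  -- `C N^{1/p} = t / 2` to any signed sum.
  set lam := 2 * C * N ^ (1 / p) / N
  set big : ι → ℝ := fun j => if lam ≤ |a j| then a j else 0
  set small : ι → ℝ := fun j => if lam ≤ |a j| then 0 else a j
  have hsplit : a = big + small := by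
    ext j; simp only [big, small, Pi.add_apply]; split_ifs <;> simp
  have hsub : ({ε | t ≤ |rademacherSum a ε|} : Finset (ι → Bool)) ⊆
      ({ε | t / 2 ≤ |rademacherSum small ε|} : Finset (ι → Bool)) := by
    intro ε
    simp only [mem_filter, mem_univ, true_and]
    intro hε
    have hbig : |rademacherSum big ε| ≤ t / 2 :=
      (abs_rademacherSum_large_le hC hr₀ hr hN ha ε).trans_eq (by linarith)
    rw [hsplit, rademacherSum_add] at hε
    linarith [abs_add_le (rademacherSum big ε) (rademacherSum small ε)]
  calc (#{ε | t ≤ |rademacherSum a ε|} : ℝ)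
      ≤ #{ε | t / 2 ≤ |rademacherSum small ε|} := by exact_mod_cast card_le_card hsub
    _ ≤ 2 * 2 ^ Fintype.card ι * exp (-(t / 2) ^ 2 / (2 * (lam * (C * t)))) :=
        card_abs_rademacherSum_tail_le (by positivity) (by positivity)
          (sum_sq_small_le hC.le hr₀ (by positivity) ha)
    _ = 2 * 2 ^ Fintype.card ι * exp (-n / (8 * C * (2 * C) ^ p)) := by
        simp only [lam, hNt, N]
        field_simp
        ring_nf

end Truncation

section Embedding

variable {ι κ : Type*} [Fintype ι] {q : ℝ≥0∞}

lemma norm_toLp_of_abs_eq_one (hq : 0 < q.toReal) {S : Finset ι} {v : ι → ℝ}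
    (hvS : ∀ j ∈ S, |v j| = 1) (hv : ∀ j ∉ S, v j = 0) :
    ‖WithLp.toLp q v‖ = (#S : ℝ) ^ (1 / q.toReal) := by
  rw [PiLp.norm_eq_sum hq,
    ← sum_subset (subset_univ S) fun j _ hj => by simp [hv j hj, zero_rpow hq.ne']]
  simp +contextual [hvS]

variable (Φ : PiLp q (fun _ : ι => ℝ) →ₗ[ℝ] PiLp ⊤ (fun _ : κ => ℝ))

lemma apply_toLp_eq_sum [DecidableEq ι] (v : ι → ℝ) (i : κ) :
    Φ (WithLp.toLp q v) i = ∑ j, v j * Φ (WithLp.toLp q (Pi.single j 1)) i := by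
  conv_lhs => rw [pi_eq_sum_univ' v]
  simp [WithLp.toLp_sum, map_sum]

variable [Fintype κ]

lemma sum_abs_apply_single_le [DecidableEq ι] [Fact (1 ≤ q)] (hq : 0 < q.toReal) {C : ℝ}
    (hΦ : ∀ v, ‖Φ v‖ ≤ C * ‖v‖) (i : κ) (S : Finset ι) :
    ∑ j ∈ S, |Φ (WithLp.toLp q (Pi.single j 1)) i| ≤ C * (#S : ℝ) ^ (1 / q.toReal) := by
  set a : ι → ℝ := fun j => Φ (WithLp.toLp q (Pi.single j 1)) i
  set v : ι → ℝ := fun j => if j ∈ S then boolSign (decide (0 ≤ a j)) else 0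
  calc ∑ j ∈ S, |a j| = Φ (WithLp.toLp q v) i := by
        rw [apply_toLp_eq_sum, ← sum_subset (subset_univ S) fun j _ hj => by simp [v, hj]]
        exact sum_congr rfl fun j hj => by
          simp only [v, if_pos hj]
          exact (boolSign_decide_nonneg_mul _).symm
    _ ≤ ‖Φ (WithLp.toLp q v) i‖ := le_abs_self _
    _ ≤ ‖Φ (WithLp.toLp q v)‖ := PiLp.norm_apply_le _ i
    _ ≤ C * ‖WithLp.toLp q v‖ := hΦ _
    _ = C * (#S : ℝ) ^ (1 / q.toReal) := by
        rw [norm_toLp_of_abs_eq_one (S := S) hq (fun j hj => by simp [v, hj])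
          fun j hj => by simp [v, hj]]

lemma exists_le_abs_apply_toLp [Nonempty κ] (hq : 0 < q.toReal)
    (hΦ : ∀ v, ‖v‖ ≤ ‖Φ v‖) (ε : ι → Bool) :
    ∃ i, (Fintype.card ι : ℝ) ^ (1 / q.toReal) ≤ |Φ (WithLp.toLp q (boolSign ∘ ε)) i| := by
  obtain ⟨i, hi⟩ :=
    exists_eq_ciSup_of_finite (f := fun i => ‖Φ (WithLp.toLp q (boolSign ∘ ε)) i‖)
  refine ⟨i, ?_⟩
  rw [← Real.norm_eq_abs, hi, ← PiLp.norm_eq_ciSup, ← card_univ,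
    ← norm_toLp_of_abs_eq_one hq (fun j _ => abs_boolSign (ε j)) (by simp)]
  exact hΦ _

end Embedding

lemma exp_le_two_mul_card_of_cover {ι κ : Type*} [Fintype ι] [DecidableEq ι] [Fintype κ]
    {x : ℝ} (P : κ → (ι → Bool) → Prop) [∀ i, DecidablePred (P i)]
    (hcover : ∀ ε, ∃ i, P i ε)
    (hcard : ∀ i, (#{ε | P i ε} : ℝ) ≤ 2 * 2 ^ Fintype.card ι * exp (-x)) :
    exp x ≤ 2 * Fintype.card κ := by
  have hunion :
      (2 : ℝ) ^ Fintype.card ι ≤ Fintype.card κ * (2 * 2 ^ Fintype.card ι * exp (-x)) :=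
    calc (2 : ℝ) ^ Fintype.card ι = #(univ : Finset (ι → Bool)) := by simp
      _ ≤ ∑ i, (#{ε | P i ε} : ℝ) := by
          have hsub : (univ : Finset (ι → Bool)) ⊆ univ.biUnion fun i => {ε | P i ε} :=
            fun ε _ => by simpa using hcover ε
          exact_mod_cast (card_le_card hsub).trans card_biUnion_le
      _ ≤ ∑ _i : κ, 2 * 2 ^ Fintype.card ι * exp (-x) := sum_le_sum fun i _ => hcard i
      _ = Fintype.card κ * (2 * 2 ^ Fintype.card ι * exp (-x)) := by simp
  rw [exp_neg] at hunion
  have h2 : (0 : ℝ) < 2 ^ Fintype.card ι := by positivity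
  field_simp at hunion
  nlinarith

theorem exp_card_div_le_two_mul_card {ι κ : Type*} [Fintype ι] [DecidableEq ι] [Nonempty ι]
    [Fintype κ] [Nonempty κ] {q : ℝ≥0∞} [Fact (1 ≤ q)] (hq : q ≠ ⊤) {C : ℝ}
    (hC : 0 < C)
    (Φ : PiLp q (fun _ : ι => ℝ) →ₗ[ℝ] PiLp ⊤ (fun _ : κ => ℝ))
    (hΦ : ∀ v, ‖v‖ ≤ ‖Φ v‖ ∧ ‖Φ v‖ ≤ C * ‖v‖) :
    exp (Fintype.card ι / (8 * C * (2 * C) ^ q.toReal)) ≤ 2 * Fintype.card κ := by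
  have hp : 1 ≤ q.toReal := by simpa using ENNReal.toReal_mono hq (Fact.out : 1 ≤ q)
  have hp₀ : 0 < q.toReal := by linarith
  have hsum : ∀ i ε, rademacherSum (fun j => Φ (WithLp.toLp q (Pi.single j 1)) i) ε =
      Φ (WithLp.toLp q (boolSign ∘ ε)) i := fun i ε => by
    rw [apply_toLp_eq_sum]; rfl
  refine exp_le_two_mul_card_of_cover _ (fun ε => ?_) fun i =>
    (card_abs_rademacherSum_tail_le_of_sum_abs_le hC hp
      (sum_abs_apply_single_le Φ hp₀ (fun v => (hΦ v).2) i)).trans_eq (by rw [neg_div])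
  obtain ⟨i, hi⟩ := exists_le_abs_apply_toLp Φ hp₀ (fun v => (hΦ v).1) ε
  exact ⟨i, (hsum i ε).symm ▸ hi⟩

theorem lq_embed_linfty_dim_bound (C : ℝ) (hC : 1 < C) (q : ℝ≥0∞) [Fact (1 ≤ q)]
    (hq : q ≠ ⊤) :
    ∃ c : ℝ, 0 < c ∧ ∀ n m : ℕ, 2 ≤ m →
      (∃ Φ : PiLp q (fun _ : Fin n => ℝ) →ₗ[ℝ] PiLp ⊤ (fun _ : Fin m => ℝ),
        ∀ v, ‖v‖ ≤ ‖Φ v‖ ∧ ‖Φ v‖ ≤ C * ‖v‖) →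
      (n : ℝ) ≤ c * Real.log m := by
  have hC₀ : 0 < C := by linarith
  set K := 8 * C * (2 * C) ^ q.toReal
  have hK : 0 < K := by positivity
  refine ⟨2 * K, by positivity, fun n m hm ⟨Φ, hΦ⟩ => ?_⟩
  have hm' : (2 : ℝ) ≤ m := by exact_mod_cast hm
  have hlog : log 2 ≤ log m := log_le_log two_pos hm'
  rcases n.eq_zero_or_pos with rfl | hn
  · simp only [CharP.cast_eq_zero]; positivity
  have : Nonempty (Fin n) := ⟨⟨0, hn⟩⟩
  have : Nonempty (Fin m) := ⟨⟨0, by omega⟩⟩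
  have hexp := exp_card_div_le_two_mul_card hq hC₀ Φ hΦ
  rw [Fintype.card_fin, Fintype.card_fin, ← le_log_iff_exp_le (by positivity),
    log_mul two_ne_zero (by positivity), div_le_iff₀ hK] at hexp
  nlinarith
end

section
/- Let C > 1. There is a constant λ > 1 depending only on C such that every finite-dimensional real normed space V is C-isomorphic to a linear subspace of ℓ_∞^m for some m ≤ λ^{dim V}. -/
/-!
Put `ε = 1 - C⁻¹`. Disjoint balls of radius `ε/2` around the points of an `ε`-separated subset of
the unit ball of an `n`-dimensional space fit in the ball of radius `1 + ε/2`, so comparing Haar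
measures bounds the number of points by `(1 + 2/ε)^n`; hence a maximal separated set is an
`ε`-net of at most that size. Apply this to the unit ball of the dual `V*`, of dimension `dim V`,
to get functionals `f₁, …, f_m`. Since `‖f_i‖ ≤ 1` and, by Hahn–Banach, some `f_i` is `ε`-close to
a norming functional of `v`, we get `(1 - ε)‖v‖ ≤ maxᵢ |f_i v| ≤ ‖v‖`, and `v ↦ (C f_i v)ᵢ` is the
required embedding into `ℓ_∞^m`.
-/

open Metric MeasureTheory Module Set
open scoped NNReal ENNReal

section Packing

variable {E : Type*} [NormedAddCommGroup E] [NormedSpace ℝ E] [FiniteDimensional ℝ E] {ε : ℝ≥0}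

theorem Finset.card_le_of_isSeparated_closedBall_one (hε : 0 < ε) {s : Finset E}
    (hs : (s : Set E) ⊆ closedBall 0 1) (hsep : IsSeparated ε (s : Set E)) :
    (s.card : ℝ) ≤ (1 + 2 / ε) ^ finrank ℝ E := by
  borelize E
  set μ : Measure E := Measure.addHaar
  set δ : ℝ := ε / 2 with hδε
  have hδ : 0 < δ := by positivity
  have hdisj : (s : Set E).PairwiseDisjoint fun x => ball x δ := by
    intro x hx y hy hxy
    have hxy : (ε : ℝ) < dist x y := by
      simpa [edist_dist, ENNReal.lt_ofReal_iff_toReal_lt] using hsep hx hy hxy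
    exact ball_disjoint_ball (by linarith [hδε])
  have hsub : ⋃ x ∈ s, ball x δ ⊆ ball 0 (1 + δ) :=
    iUnion₂_subset fun x hx =>
      ball_subset_ball' (by linarith [mem_closedBall_zero_iff.1 (hs hx), dist_zero_right x])
  have hvol : (s.card : ℝ≥0∞) * ENNReal.ofReal (δ ^ finrank ℝ E) ≤
      ENNReal.ofReal ((1 + δ) ^ finrank ℝ E) := by
    refine (ENNReal.mul_le_mul_iff_left (measure_ball_pos μ 0 one_pos).ne'
      measure_ball_lt_top.ne).1 ?_
    calc (s.card : ℝ≥0∞) * ENNReal.ofReal (δ ^ finrank ℝ E) * μ (ball 0 1)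
        = μ (⋃ x ∈ s, ball x δ) := by
          rw [measure_biUnion_finset hdisj fun _ _ => measurableSet_ball]
          simp only [μ.addHaar_ball_of_pos _ hδ, Finset.sum_const, nsmul_eq_mul, mul_assoc]
      _ ≤ μ (ball 0 (1 + δ)) := measure_mono hsub
      _ = ENNReal.ofReal ((1 + δ) ^ finrank ℝ E) * μ (ball 0 1) :=
        μ.addHaar_ball_of_pos _ (by positivity)
  have hcard : (s.card : ℝ) * δ ^ finrank ℝ E ≤ (1 + δ) ^ finrank ℝ E := by
    rwa [← ENNReal.ofReal_natCast, ← ENNReal.ofReal_mul (by positivity),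
      ENNReal.ofReal_le_ofReal_iff (by positivity)] at hvol
  calc (s.card : ℝ) ≤ (1 + δ) ^ finrank ℝ E / δ ^ finrank ℝ E := by
        rwa [le_div_iff₀ (by positivity)]
    _ = (1 + 2 / ε) ^ finrank ℝ E := by rw [← div_pow]; congr 1; field_simp; ring

theorem Set.encard_le_of_isSeparated_closedBall_one (hε : 0 < ε) {s : Set E}
    (hs : s ⊆ closedBall 0 1) (hsep : IsSeparated ε s) :
    s.encard ≤ ⌊(1 + 2 / ε : ℝ) ^ finrank ℝ E⌋₊ := by
  by_contra! hlt
  obtain ⟨t, hts, htcard⟩ := exists_subset_encard_eq (Order.add_one_le_of_lt hlt)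
  have htfin : t.Finite := finite_of_encard_eq_coe htcard
  have := (htfin.toFinset).card_le_of_isSeparated_closedBall_one hε
    (by simpa using hts.trans hs) (by simpa using hsep.subset hts)
  have hcard : htfin.toFinset.card = ⌊(1 + 2 / ε : ℝ) ^ finrank ℝ E⌋₊ + 1 := by
    rw [htfin.encard_eq_coe_toFinset_card] at htcard
    exact_mod_cast htcard
  rw [hcard, Nat.cast_add, Nat.cast_one] at this
  exact (Nat.lt_floor_add_one _).not_ge this

theorem exists_finite_isCover_closedBall_one (hε : 0 < ε) :
    ∃ N ⊆ closedBall (0 : E) 1, N.Finite ∧ IsCover ε (closedBall 0 1) N ∧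
      N.encard ≤ ⌊(1 + 2 / ε : ℝ) ^ finrank ℝ E⌋₊ := by
  have hpack : packingNumber ε (closedBall (0 : E) 1) ≤ ⌊(1 + 2 / ε : ℝ) ^ finrank ℝ E⌋₊ :=
    iSup₂_le fun _ hs => iSup_le fun hsep => encard_le_of_isSeparated_closedBall_one hε hs hsep
  have htop : packingNumber ε (closedBall (0 : E) 1) ≠ ⊤ :=
    (hpack.trans_lt (ENat.natCast_lt_top _)).ne
  have hcard := (encard_maximalSeparatedSet htop).trans_le hpack
  exact ⟨_, maximalSeparatedSet_subset, finite_of_encard_le_coe hcard,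
    isCover_maximalSeparatedSet htop, hcard⟩

end Packing

section Dual

variable {V : Type*} [NormedAddCommGroup V] [NormedSpace ℝ V]

theorem finrank_strongDual [FiniteDimensional ℝ V] : finrank ℝ (StrongDual ℝ V) = finrank ℝ V :=
  LinearMap.toContinuousLinearMap.finrank_eq.symm.trans (finrank_linearMap_self ℝ ℝ V)

theorem one_sub_mul_norm_le_norm_pi_apply {ε : ℝ≥0} {ι : Type*} [Fintype ι]
    {f : ι → StrongDual ℝ V} (hf : IsCover ε (closedBall 0 1) (range f)) (v : V) :
    (1 - ε) * ‖v‖ ≤ ‖ContinuousLinearMap.pi f v‖ := by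
  obtain ⟨g, hg, hgv⟩ := exists_dual_vector'' ℝ v
  obtain ⟨_, ⟨i, rfl⟩, hgf⟩ := hf (mem_closedBall_zero_iff.2 hg)
  have hgf : ‖g - f i‖ ≤ ε := by
    rw [← dist_eq_norm]
    exact_mod_cast edist_le_coe.1 hgf
  have hgv : g v = ‖v‖ := by exact_mod_cast hgv
  have hdiff : |g v - f i v| ≤ ε * ‖v‖ := by simpa using (g - f i).le_of_opNorm_le hgf v
  calc (1 - ε) * ‖v‖ = g v - ε * ‖v‖ := by rw [hgv]; ring
    _ ≤ f i v := by linarith [(abs_le.1 hdiff).2]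
    _ ≤ ‖ContinuousLinearMap.pi f v‖ :=
      (le_abs_self _).trans (norm_le_pi_norm (ContinuousLinearMap.pi f v) i)

theorem norm_pi_apply_le_of_range_subset_closedBall {ι : Type*} [Fintype ι]
    {f : ι → StrongDual ℝ V} (hf : range f ⊆ closedBall 0 1) (v : V) :
    ‖ContinuousLinearMap.pi f v‖ ≤ ‖v‖ := by
  have hpi := ContinuousLinearMap.norm_pi_le_of_le
    (fun i => mem_closedBall_zero_iff.1 (hf ⟨i, rfl⟩)) zero_le_one
  simpa using (ContinuousLinearMap.pi f).le_of_opNorm_le hpi v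

theorem exists_linearMap_piLp_top_of_isCover {ε : ℝ≥0} {C : ℝ} (hC : 0 < C)
    (hCε : C * (1 - ε) = 1) {ι : Type*} [Fintype ι] {f : ι → StrongDual ℝ V}
    (hf : range f ⊆ closedBall 0 1) (hcover : IsCover ε (closedBall 0 1) (range f)) :
    ∃ Φ : V →ₗ[ℝ] PiLp ⊤ (fun _ : ι => ℝ), ∀ v, ‖v‖ ≤ ‖Φ v‖ ∧ ‖Φ v‖ ≤ C * ‖v‖ := by
  refine ⟨(PiLp.equivₗᵢ (𝕜 := ℝ) _).symm.toLinearMap ∘ₗ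
    (C • ContinuousLinearMap.pi f).toLinearMap, fun v => ?_⟩
  simp only [LinearMap.comp_apply, LinearEquiv.coe_coe, LinearIsometryEquiv.norm_map,
    LinearIsometryEquiv.coe_toLinearEquiv, ContinuousLinearMap.coe_coe, smul_apply, norm_smul,
    Real.norm_of_nonneg hC.le]
  constructor
  · calc ‖v‖ = C * ((1 - ε) * ‖v‖) := by rw [← mul_assoc, hCε, one_mul]
      _ ≤ C * ‖ContinuousLinearMap.pi f v‖ := by
        gcongr
        exact one_sub_mul_norm_le_norm_pi_apply hcover v
  · gcongr
    exact norm_pi_apply_le_of_range_subset_closedBall hf v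

end Dual

theorem embed_linfty_exists (C : ℝ) (hC : 1 < C) :
    ∃ lam : ℝ, 1 < lam ∧
      ∀ (V : Type) [NormedAddCommGroup V] [NormedSpace ℝ V] [FiniteDimensional ℝ V],
        ∃ m : ℕ, (m : ℝ) ≤ lam ^ Module.finrank ℝ V ∧
          ∃ Φ : V →ₗ[ℝ] PiLp ⊤ (fun _ : Fin m => ℝ),
            ∀ v, ‖v‖ ≤ ‖Φ v‖ ∧ ‖Φ v‖ ≤ C * ‖v‖ := by
  set ε : ℝ≥0 := ⟨1 - C⁻¹, sub_nonneg.2 (inv_le_one_of_one_le₀ hC.le)⟩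
  have hε : 0 < ε := NNReal.coe_pos.1 (sub_pos.2 (inv_lt_one_of_one_lt₀ hC))
  have hCε : C * (1 - ε) = 1 := by
    change C * (1 - (1 - C⁻¹)) = 1
    field_simp
    ring
  refine ⟨1 + 2 / ε, lt_add_of_pos_right 1 (by positivity), fun V _ _ _ => ?_⟩
  obtain ⟨N, hN, hNfin, hNcover, hNcard⟩ :=
    exists_finite_isCover_closedBall_one (E := StrongDual ℝ V) hε
  obtain ⟨m, f, hf, rfl⟩ := hNfin.fin_param
  have hm : m ≤ ⌊(1 + 2 / ε : ℝ) ^ finrank ℝ V⌋₊ := by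
    rw [← finrank_strongDual, ← ENat.natCast_le_natCast]
    simpa using hf.encard_range.trans hNcard
  exact ⟨m, (Nat.cast_le.2 hm).trans (Nat.floor_le (by positivity)),
    exists_linearMap_piLp_top_of_isCover (zero_lt_one.trans hC) hCε hN hNcover⟩
end

section
/- Let k ≥ 2 be an integer and λ > 1. Then there is c > 0 depending only on k and λ such that for any nonempty finite set Z and any S ⊆ {1,...,k}^Z with |S| ≥ ((k−1)λ)^{|Z|}, there exists J ⊆ Z such that |J| ≥ c|Z| and the restriction of S to J is all of {1,...,k}^J. -/
open Finset Function

/-!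
Write `k = |α|`. If `S ⊆ α^A` shatters no `d`-subset of `A`, then
`|S| ≤ (k - 1)^|A| * ∑_{i<d} C(|A|, i)`. Indeed, compress a coordinate `z ∈ A` to a constant:
a compressed function has at most `k - 1` preimages unless all `k` of its `z`-extensions lie in
`S`. The compressed family shatters no `d`-set avoiding `z`, and the family of fully extendable
functions shatters no `(d - 1)`-set avoiding `z`, which gives Pascal's recursion for the bound.

For `d = ⌊n / m⌋ + 1` the estimate `(∑_{i≤j} C(n, i)) t^j ≤ (1 + t)^n`, `0 < t ≤ 1`, makes this
bound smaller than `((k - 1) λ)^n` as soon as `(1 + t)^m < λ^m t`, and such `t, m` exist for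
every `λ > 1`.
-/

section Shattering

variable {Z α : Type*}

def ShattersFun (S : Finset (Z → α)) (J : Finset Z) : Prop :=
  ∀ g : Z → α, ∃ f ∈ S, ∀ z ∈ J, f z = g z

theorem shattersFun_empty {S : Finset (Z → α)} (hS : S.Nonempty) : ShattersFun S ∅ := fun _ ↦
  let ⟨f, hf⟩ := hS
  ⟨f, hf, by simp⟩

theorem ShattersFun.of_forall_exists {R S : Finset (Z → α)} {J : Finset Z} (h : ShattersFun R J)
    (hRS : ∀ g ∈ R, ∃ f ∈ S, ∀ z ∈ J, f z = g z) : ShattersFun S J := fun g ↦ by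
  obtain ⟨h, hR, hhg⟩ := h g
  obtain ⟨f, hS, hfh⟩ := hRS h hR
  exact ⟨f, hS, fun z hz ↦ (hfh z hz).trans (hhg z hz)⟩

theorem ShattersFun.insert [DecidableEq Z] {S T : Finset (Z → α)} {J : Finset Z} {z : Z}
    (h : ShattersFun T J) (hT : ∀ f ∈ T, ∀ v, update f z v ∈ S) :
    ShattersFun S (insert z J) := fun g ↦ by
  obtain ⟨f, hf, hfg⟩ := h g
  refine ⟨update f z (g z), hT f hf (g z), fun y hy ↦ ?_⟩
  rcases eq_or_ne y z with rfl | hyz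
  · exact update_self ..
  · rw [update_of_ne hyz]
    exact hfg y ((mem_insert.mp hy).resolve_left hyz)

theorem Finset.card_filter_univ_le [Fintype α] (p : α → Prop) [DecidablePred p] :
    #{v | p v} ≤ Fintype.card α - 1 + if ∀ v, p v then 1 else 0 := by
  split_ifs with hp
  · have := card_le_univ {v | p v}
    omega
  · obtain ⟨v, hv⟩ := not_forall.mp hp
    have := card_lt_univ_of_notMem (s := {v | p v}) (by simpa using hv)
    omega

theorem card_le_mul_card_image_update_add [DecidableEq Z] [Fintype α] [DecidableEq (Z → α)]
    (S : Finset (Z → α)) (z : Z) (a : α) :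
    #S ≤ (Fintype.card α - 1) * #(S.image (update · z a)) +
      #{g ∈ S.image (update · z a) | ∀ v, update g z v ∈ S} := by
  have hcover :
      S ⊆ (S.image (update · z a)).biUnion fun g ↦ image (update g z) {v | update g z v ∈ S} := by
    intro f hf
    simp only [mem_biUnion, mem_image, mem_filter_univ]
    exact ⟨update f z a, ⟨f, hf, rfl⟩, f z, by simpa using hf, by simp⟩
  calc #S ≤ ∑ g ∈ S.image (update · z a), #(image (update g z) {v | update g z v ∈ S}) :=
        (card_le_card hcover).trans card_biUnion_le
    _ ≤ ∑ g ∈ S.image (update · z a),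
          (Fintype.card α - 1 + if ∀ v, update g z v ∈ S then 1 else 0) :=
        sum_le_sum fun g _ ↦ card_image_le.trans (card_filter_univ_le _)
    _ = _ := by rw [sum_add_distrib, sum_const, smul_eq_mul, mul_comm, card_filter]

theorem sum_range_succ_choose_succ (n d : ℕ) :
    ∑ i ∈ range (d + 1), (n + 1).choose i =
      ∑ i ∈ range (d + 1), n.choose i + ∑ i ∈ range d, n.choose i := by
  rw [sum_range_succ' (fun i ↦ (n + 1).choose i), sum_range_succ' (fun i ↦ n.choose i)]
  simp only [Nat.choose_succ_succ, sum_add_distrib, Nat.choose_zero_right, Nat.succ_eq_add_one]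
  omega

def shatterBound (k n d : ℕ) : ℕ := (k - 1) ^ n * ∑ i ∈ range d, n.choose i

theorem shatterBound_succ_succ {k : ℕ} (hk : 2 ≤ k) (n d : ℕ) :
    (k - 1) * shatterBound k n (d + 1) + shatterBound k n d ≤ shatterBound k (n + 1) (d + 1) := by
  have hpow : (k - 1) ^ n ≤ (k - 1) ^ (n + 1) := Nat.pow_le_pow_right (by omega) n.le_succ
  calc (k - 1) * shatterBound k n (d + 1) + shatterBound k n d
      ≤ (k - 1) ^ (n + 1) * ∑ i ∈ range (d + 1), n.choose i +
          (k - 1) ^ (n + 1) * ∑ i ∈ range d, n.choose i := by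
        unfold shatterBound
        rw [← mul_assoc, ← pow_succ']
        gcongr
    _ = shatterBound k (n + 1) (d + 1) := by
        rw [shatterBound, sum_range_succ_choose_succ, mul_add]

theorem exists_shattersFun_of_shatterBound_lt [Fintype α] (hα : 2 ≤ Fintype.card α)
    (A : Finset Z) {S : Finset (Z → α)} {d : ℕ} (hS : ∀ f ∈ S, ∀ g ∈ S, ∀ z ∉ A, f z = g z)
    (hcard : shatterBound (Fintype.card α) #A d < #S) : ∃ J ⊆ A, d ≤ #J ∧ ShattersFun S J := by
  classical
  induction A using Finset.induction_on generalizing S d with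
  | empty =>
    rcases d with _ | d
    · exact ⟨∅, subset_rfl, le_rfl,
        shattersFun_empty (card_pos.mp (by simpa [shatterBound] using hcard))⟩
    · have : #S ≤ 1 :=
        card_le_one.mpr fun f hf g hg ↦ funext fun z ↦ hS f hf g hg z (notMem_empty z)
      simp [shatterBound, sum_range_succ'] at hcard
      omega
  | insert z A hz ih =>
    rcases d with _ | d
    · exact ⟨∅, empty_subset _, le_rfl,
        shattersFun_empty (card_pos.mp (by simpa [shatterBound] using hcard))⟩
    obtain ⟨f₀, hf₀⟩ : S.Nonempty := card_pos.mp (by omega)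
    have hcount := card_le_mul_card_image_update_add S z (f₀ z)
    set R := S.image (update · z (f₀ z))
    set T := {g ∈ R | ∀ v, update g z v ∈ S}
    have hR : ∀ g ∈ R, ∀ h ∈ R, ∀ y ∉ A, g y = h y := by
      simp only [R, mem_image]
      rintro _ ⟨f, hf, rfl⟩ _ ⟨g, hg, rfl⟩ y hy
      rcases eq_or_ne y z with rfl | hyz
      · simp
      · simpa [update_of_ne hyz] using hS f hf g hg y (by simp [hyz, hy])
    have hstep := shatterBound_succ_succ hα #A d
    rw [card_insert_of_notMem hz] at hcard
    by_cases hRcard : shatterBound (Fintype.card α) #A (d + 1) < #R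
    · obtain ⟨J, hJA, hdJ, hJ⟩ := ih hR hRcard
      refine ⟨J, hJA.trans (subset_insert _ _), hdJ, hJ.of_forall_exists fun g hg ↦ ?_⟩
      obtain ⟨f, hf, rfl⟩ := mem_image.mp hg
      exact ⟨f, hf, fun y hy ↦ (update_of_ne (ne_of_mem_of_not_mem (hJA hy) hz) _ _).symm⟩
    · have hTcard : shatterBound (Fintype.card α) #A d < #T := by
        have := Nat.mul_le_mul_left (Fintype.card α - 1) (not_lt.mp hRcard)
        omega
      obtain ⟨J, hJA, hdJ, hJ⟩ :=
        ih (fun g hg h hh ↦ hR g (mem_filter.1 hg).1 h (mem_filter.1 hh).1) hTcard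
      refine ⟨insert z J, insert_subset_insert _ hJA, ?_, hJ.insert fun g hg ↦ (mem_filter.1 hg).2⟩
      rw [card_insert_of_notMem fun h ↦ hz (hJA h)]
      omega

end Shattering

theorem sum_range_choose_mul_pow_le {t : ℝ} (ht0 : 0 ≤ t) (ht1 : t ≤ 1) {n j : ℕ} (hj : j ≤ n) :
    (∑ i ∈ range (j + 1), (n.choose i : ℝ)) * t ^ j ≤ (1 + t) ^ n :=
  calc (∑ i ∈ range (j + 1), (n.choose i : ℝ)) * t ^ j
      ≤ ∑ i ∈ range (j + 1), (n.choose i : ℝ) * t ^ i := by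
        rw [sum_mul]
        refine sum_le_sum fun i hi ↦ mul_le_mul_of_nonneg_left ?_ (by positivity)
        exact pow_le_pow_of_le_one ht0 ht1 (Nat.lt_succ_iff.mp (mem_range.mp hi))
    _ ≤ ∑ i ∈ range (n + 1), (n.choose i : ℝ) * t ^ i := by gcongr
    _ = (1 + t) ^ n := by
        rw [add_comm (1 : ℝ) t, add_pow]
        simp [mul_comm]

theorem exists_pow_lt_pow_mul {lam : ℝ} (hlam : 1 < lam) :
    ∃ t : ℝ, 0 < t ∧ t ≤ 1 ∧ ∃ m : ℕ, 0 < m ∧ (1 + t) ^ m < lam ^ m * t := by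
  set t := min 1 ((lam - 1) / 2)
  have ht0 : 0 < t := lt_min one_pos (by linarith)
  have ht1 : t ≤ 1 := min_le_left _ _
  have hlt : 1 < lam / (1 + t) := by
    rw [one_lt_div (by positivity)]
    linarith [min_le_right 1 ((lam - 1) / 2)]
  obtain ⟨m, hm⟩ := pow_unbounded_of_one_lt (1 / t) hlt
  have hm0 : 0 < m := by
    refine Nat.pos_of_ne_zero fun h ↦ ?_
    rw [h, pow_zero, one_div, inv_lt_one₀ ht0] at hm
    linarith
  rw [div_pow, div_lt_div_iff₀ ht0 (by positivity), one_mul] at hm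
  exact ⟨t, ht0, ht1, m, hm0, hm⟩

theorem sum_range_choose_lt_pow {lam t : ℝ} {m : ℕ} (hlam : 0 ≤ lam) (ht0 : 0 < t) (ht1 : t ≤ 1)
    (hm : (1 + t) ^ m < lam ^ m * t) {n : ℕ} (hn : 0 < n) :
    ∑ i ∈ range (n / m + 1), (n.choose i : ℝ) < lam ^ n := by
  have hm0 : m ≠ 0 := by
    rintro rfl
    rw [pow_zero, pow_zero, one_mul] at hm
    linarith
  have hpow : (1 + t) ^ n < lam ^ n * t ^ (n / m) := by
    rw [← pow_lt_pow_iff_left₀ (by positivity) (by positivity) hm0]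
    calc ((1 + t) ^ n) ^ m = ((1 + t) ^ m) ^ n := by rw [← pow_mul, ← pow_mul, mul_comm]
      _ < (lam ^ m * t) ^ n := by gcongr
      _ = (lam ^ n) ^ m * t ^ n := by rw [mul_pow, ← pow_mul, ← pow_mul, mul_comm m]
      _ ≤ (lam ^ n) ^ m * t ^ (n / m * m) :=
        mul_le_mul_of_nonneg_left (pow_le_pow_of_le_one ht0.le ht1 (Nat.div_mul_le_self n m))
          (by positivity)
      _ = (lam ^ n * t ^ (n / m)) ^ m := by rw [mul_pow, pow_mul]
  have hsum := sum_range_choose_mul_pow_le ht0.le ht1 (Nat.div_le_self n m)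
  exact lt_of_mul_lt_mul_right (hsum.trans_lt hpow) (by positivity)

theorem karpovsky_milman (k : ℕ) (hk : 2 ≤ k) (lam : ℝ) (hlam : 1 < lam) :
    ∃ c : ℝ, 0 < c ∧
      ∀ (Z : Type) [Fintype Z] [Nonempty Z] (S : Finset (Z → Fin k)),
        (((k : ℝ) - 1) * lam) ^ Fintype.card Z ≤ (S.card : ℝ) →
        ∃ J : Finset Z, c * (Fintype.card Z : ℝ) ≤ J.card ∧
          ∀ g : Z → Fin k, ∃ f ∈ S, ∀ z ∈ J, f z = g z := by
  obtain ⟨t, ht0, ht1, m, hm0, hm⟩ := exists_pow_lt_pow_mul hlam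
  refine ⟨1 / m, by positivity, fun Z _ _ S hS ↦ ?_⟩
  set n := Fintype.card Z
  have hbound : shatterBound k n (n / m + 1) < #S := by
    have hsum := sum_range_choose_lt_pow (by linarith) ht0 ht1 hm (Fintype.card_pos (α := Z))
    have hk1 : (0 : ℝ) < k - 1 := by
      have : (2 : ℝ) ≤ k := by exact_mod_cast hk
      linarith
    have : (shatterBound k n (n / m + 1) : ℝ) < ((k - 1) * lam) ^ n := by
      rw [shatterBound, mul_pow]
      push_cast [Nat.cast_sub (by omega : 1 ≤ k)]
      gcongr
    exact_mod_cast this.trans_le hS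
  obtain ⟨J, -, hdJ, hJ⟩ := exists_shattersFun_of_shatterBound_lt
    (by simpa using hk) (univ : Finset Z) (S := S) (by simp) (by simpa using hbound)
  refine ⟨J, ?_, hJ⟩
  calc 1 / (m : ℝ) * n = (n : ℝ) / m := by ring
    _ ≤ (n / m : ℕ) + 1 := by
      rw [← Nat.floor_div_eq_div (K := ℝ)]
      exact (Nat.lt_floor_add_one _).le
    _ ≤ #J := by exact_mod_cast hdJ
end

section
/- For each j ∈ {1,2,3}, let μ_j = (1/2)(δ_{x_j} + δ_{y_j}) with x_j ≠ y_j in a compact metrizable space X, and let f_j ∈ C(X) satisfy: f_j(x_j) = −f_j(y_j) ∈ (1,2) for j = 1,2; and f₃(x₃) ∈ (1,2), f₃(y₃) ∈ (−2,−1), f₃(x₃) + f₃(y₃) > 0. Then Σ_{j=1}^3 μ_j(f_j) > 0, yet there do not exist closed sets A₁, A₂, A₃ ⊆ X with Σ_{j=1}^3 min_{x∈A_j} f_j(x) > 0 and Σ_{j=1}^3 μ_j(A_j) > 2. -/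
open MeasureTheory
open scoped ENNReal

/-!
Each `μ j` is uniform on the two points `x j, y j`. A set of positive `μ j`-mass contains one
of them, where `f j < 2`, and a set of mass above `1/2` contains `y j`, where `f j < -1`. Total
mass above `2` with masses `≤ 1` leaves at most one index of mass `≤ 1/2`, so the lower bounds
`t j` sum to less than `2 - 1 - 1 = 0`. Meanwhile `∫ f j ∂μ j = (f j (x j) + f j (y j)) / 2`,
which vanishes for `j = 0, 1` and is positive for `j = 2`.
-/

section TwoPointMeasure

variable {X : Type*} [MeasurableSpace X]

noncomputable def twoPointMeasure (a b : X) : Measure X :=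
  (2 : ℝ≥0∞)⁻¹ • Measure.dirac a + (2 : ℝ≥0∞)⁻¹ • Measure.dirac b

instance (a b : X) : IsProbabilityMeasure (twoPointMeasure a b) :=
  ⟨by simp [twoPointMeasure, ENNReal.inv_two_add_inv_two]⟩

theorem integral_twoPointMeasure {E : Type*} [NormedAddCommGroup E] [NormedSpace ℝ E]
    [CompleteSpace E] {f : X → E} (hf : StronglyMeasurable f) (a b : X) :
    ∫ z, f z ∂twoPointMeasure a b = (2 : ℝ)⁻¹ • (f a + f b) := by
  have hint : ∀ c, Integrable f (Measure.dirac c) := fun c =>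
    integrable_dirac' hf enorm_lt_top
  rw [twoPointMeasure, integral_add_measure ((hint a).smul_measure (by simp))
    ((hint b).smul_measure (by simp)), integral_smul_measure, integral_smul_measure,
    integral_dirac' _ _ hf, integral_dirac' _ _ hf, smul_add]
  simp [ENNReal.toReal_inv]

theorem twoPointMeasure_apply_toReal {s : Set X} (hs : MeasurableSet s) (a b : X) :
    (twoPointMeasure a b s).toReal = (s.indicator 1 a + s.indicator 1 b) / 2 := by
  simp only [twoPointMeasure, Measure.add_apply, Measure.smul_apply, Measure.dirac_apply' _ hs]
  by_cases ha : a ∈ s <;> by_cases hb : b ∈ s <;> norm_num [ha, hb, ENNReal.toReal_add]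

theorem mem_or_mem_of_twoPointMeasure_pos {s : Set X} (hs : MeasurableSet s) {a b : X}
    (h : 0 < (twoPointMeasure a b s).toReal) : a ∈ s ∨ b ∈ s := by
  rw [twoPointMeasure_apply_toReal hs] at h
  by_contra! hab
  simp [hab.1, hab.2] at h

theorem mem_and_mem_of_half_lt_twoPointMeasure {s : Set X} (hs : MeasurableSet s) {a b : X}
    (h : 1 / 2 < (twoPointMeasure a b s).toReal) : a ∈ s ∧ b ∈ s := by
  rw [twoPointMeasure_apply_toReal hs] at h
  by_contra! hab
  by_cases ha : a ∈ s
  · simp [ha, hab ha] at h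
  · by_cases hb : b ∈ s <;> norm_num [ha, hb] at h

end TwoPointMeasure

theorem sum_neg_of_two_lt_sum {m t : Fin 3 → ℝ} (hle : ∀ j, m j ≤ 1)
    (hpos : ∀ j, 0 < m j → t j < 2) (hhalf : ∀ j, 1 / 2 < m j → t j < -1)
    (hm : 2 < ∑ j, m j) : ∑ j, t j < 0 := by
  rw [Fin.sum_univ_three] at hm ⊢
  have := hle 0; have := hle 1; have := hle 2
  rcases le_or_gt (m 0) (1 / 2) with h0 | h0
  · linarith [hpos 0 (by linarith), hhalf 1 (by linarith), hhalf 2 (by linarith)]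
  rcases le_or_gt (m 1) (1 / 2) with h1 | h1
  · linarith [hhalf 0 h0, hpos 1 (by linarith), hhalf 2 (by linarith)]
  · linarith [hhalf 0 h0, hhalf 1 h1, hpos 2 (by linarith)]

theorem no_closed_selection_k3_general {X : Type*} [TopologicalSpace X]
    [MeasurableSpace X] [BorelSpace X]
    (x y : Fin 3 → X) (f : Fin 3 → C(X, ℝ))
    (μ : Fin 3 → Measure X)
    (hμ : ∀ j, μ j = (2 : ℝ≥0∞)⁻¹ • Measure.dirac (x j) +
      (2 : ℝ≥0∞)⁻¹ • Measure.dirac (y j))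
    (h12 : ∀ j : Fin 3, j ≠ 2 →
      f j (x j) = -f j (y j) ∧ f j (x j) ∈ Set.Ioo (1 : ℝ) 2)
    (h3a : f 2 (x 2) ∈ Set.Ioo (1 : ℝ) 2) (h3b : f 2 (y 2) ∈ Set.Ioo (-2 : ℝ) (-1))
    (h3c : 0 < f 2 (x 2) + f 2 (y 2)) :
    (0 < ∑ j, ∫ z, f j z ∂(μ j)) ∧
    ¬ ∃ A : Fin 3 → Set X, (∀ j, IsClosed (A j) ∧ (A j).Nonempty) ∧
        (∃ t : Fin 3 → ℝ, (∀ j, ∀ z ∈ A j, t j ≤ f j z) ∧ 0 < ∑ j, t j) ∧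
        2 < ∑ j, (μ j (A j)).toReal := by
  have hμ' : ∀ j, μ j = twoPointMeasure (x j) (y j) := hμ
  have hf : ∀ j, f j (x j) < 2 ∧ f j (y j) < -1 := by
    intro j
    by_cases hj : j = 2
    · subst hj; exact ⟨h3a.2, h3b.2⟩
    · obtain ⟨hsymm, hx1, hx2⟩ := h12 j hj
      exact ⟨hx2, by linarith⟩
  refine ⟨?_, fun ⟨A, hA, ⟨t, ht, htsum⟩, hm⟩ => htsum.not_gt ?_⟩
  · simp only [hμ', integral_twoPointMeasure (f _).continuous.stronglyMeasurable,
      Fin.sum_univ_three, smul_eq_mul]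
    linarith [(h12 0 (by decide)).1, (h12 1 (by decide)).1]
  refine sum_neg_of_two_lt_sum (fun j => ?_) (fun j hj => ?_) (fun j hj => ?_) hm
  · rw [hμ']; exact measureReal_le_one
  · rw [hμ'] at hj
    rcases mem_or_mem_of_twoPointMeasure_pos (hA j).1.measurableSet hj with h | h
    · exact (ht j _ h).trans_lt (hf j).1
    · linarith [ht j _ h, (hf j).2]
  · rw [hμ'] at hj
    exact (ht j _ (mem_and_mem_of_half_lt_twoPointMeasure (hA j).1.measurableSet hj).2).trans_lt
      (hf j).2

theorem no_closed_selection_k3 {X : Type*} [TopologicalSpace X] [CompactSpace X]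
    [TopologicalSpace.MetrizableSpace X] [MeasurableSpace X] [BorelSpace X]
    (x y : Fin 3 → X) (hxy : ∀ j, x j ≠ y j) (f : Fin 3 → C(X, ℝ))
    (μ : Fin 3 → Measure X)
    (hμ : ∀ j, μ j = (2 : ℝ≥0∞)⁻¹ • Measure.dirac (x j) +
      (2 : ℝ≥0∞)⁻¹ • Measure.dirac (y j))
    (h12 : ∀ j : Fin 3, j ≠ 2 →
      f j (x j) = -f j (y j) ∧ f j (x j) ∈ Set.Ioo (1 : ℝ) 2)
    (h3a : f 2 (x 2) ∈ Set.Ioo (1 : ℝ) 2) (h3b : f 2 (y 2) ∈ Set.Ioo (-2 : ℝ) (-1))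
    (h3c : 0 < f 2 (x 2) + f 2 (y 2)) :
    (0 < ∑ j, ∫ z, f j z ∂(μ j)) ∧
    ¬ ∃ A : Fin 3 → Set X, (∀ j, IsClosed (A j) ∧ (A j).Nonempty) ∧
        (∃ t : Fin 3 → ℝ, (∀ j, ∀ z ∈ A j, t j ≤ f j z) ∧ 0 < ∑ j, t j) ∧
        2 < ∑ j, (μ j (A j)).toReal :=
  no_closed_selection_k3_general x y f μ hμ h12 h3a h3b h3c
end
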